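/- arXiv:1907.03100 — 3 statements merged into one kernel-verified Lean document; each statement's English description precedes it below -/
import Mathlib

section
/- Let d ≥ 1, and consider the deep decoder G with d layers. Assume ξ ≥ 0, μ ≥ 1, that the fixed input matrix satisfies ‖B₁‖_F ≤ ξ, and that every upsampling matrix satisfies ‖Uᵢ‖ ≤ 1 in spectral norm. Then for all coefficient tuples C = (C₁,…,C_{d−1},c_d) and C′ = (C₁′,…,C_{d−1}′,c_d′) in the μ-bounded set B_μ, the outputs satisfy ‖G(C) − G(C′)‖₂ ≤ ξ · μ^d · d · ( Σ_{i=1}^{d−1} ‖Cᵢ − Cᵢ′‖_F² + ‖c_d − c_d′‖₂² )^{1/2}. In particular, on B_μ the deep decoder is Lipschitz with constant ξ μ^d d when its coefficients are viewed as one Euclidean vector. -/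
/-!
ReLU is 1-Lipschitz entrywise and `‖U M‖_F ≤ ‖U‖ ‖M‖_F`, so a layer with `‖U‖ ≤ 1` and
`‖C‖_F ≤ μ` multiplies Frobenius norms by at most `μ`; splitting
`X D - Y E = (X - Y) D + Y (D - E)` it also gives
`‖B_{i+1} - B'_{i+1}‖_F ≤ μ ‖B_i - B'_i‖_F + ‖B'_i‖_F ‖C_i - C'_i‖_F`.
With `‖B'_i‖_F ≤ ξ μ^i` this recursion yields `‖B_i - B'_i‖_F ≤ ξ μ^i ∑_{j<i} ‖C_j - C'_j‖_F`;
the output map is one more step of the same kind, and Cauchy–Schwarz bounds the sum of the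
`d` coefficient errors by `√d ≤ d` times their ℓ₂ norm.
-/

open Matrix Finset

noncomputable def euclNorm {ι : Type*} [Fintype ι] (v : ι → ℝ) : ℝ :=
  Real.sqrt (∑ i, v i ^ 2)

noncomputable def frobNorm {ι κ : Type*} [Fintype ι] [Fintype κ] (A : Matrix ι κ ℝ) : ℝ :=
  Real.sqrt (∑ i, ∑ j, A i j ^ 2)

noncomputable def specNorm {ι κ : Type*} [Fintype ι] [Fintype κ] (A : Matrix ι κ ℝ) : ℝ :=
  sSup {r : ℝ | ∃ v : κ → ℝ, euclNorm v ≤ 1 ∧ r = euclNorm (A *ᵥ v)}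

def reluM {ι κ : Type*} (A : Matrix ι κ ℝ) : Matrix ι κ ℝ :=
  Matrix.of fun i j => max (A i j) 0

attribute [local instance] Matrix.frobeniusNormedAddCommGroup

section Norms

variable {ι κ α : Type*} [Fintype ι] [Fintype κ] [Fintype α]

lemma euclNorm_eq_norm (v : ι → ℝ) : euclNorm v = ‖WithLp.toLp 2 v‖ := by
  simp [euclNorm, EuclideanSpace.norm_eq]

lemma frobNorm_eq_norm (A : Matrix ι κ ℝ) : frobNorm A = ‖A‖ := by
  simp [frobNorm, Matrix.frobenius_norm_def, Real.sqrt_eq_rpow]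

lemma euclNorm_nonneg (v : ι → ℝ) : 0 ≤ euclNorm v := Real.sqrt_nonneg _

lemma frobNorm_nonneg (A : Matrix ι κ ℝ) : 0 ≤ frobNorm A := Real.sqrt_nonneg _

lemma euclNorm_smul (a : ℝ) (v : ι → ℝ) : euclNorm (a • v) = |a| * euclNorm v := by
  rw [euclNorm_eq_norm, euclNorm_eq_norm, WithLp.toLp_smul, norm_smul, Real.norm_eq_abs]

lemma euclNorm_add_le (u v : ι → ℝ) : euclNorm (u + v) ≤ euclNorm u + euclNorm v := by
  simpa only [euclNorm_eq_norm, WithLp.toLp_add] using norm_add_le _ _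

lemma frobNorm_add_le (A B : Matrix ι κ ℝ) : frobNorm (A + B) ≤ frobNorm A + frobNorm B := by
  simpa only [frobNorm_eq_norm] using norm_add_le A B

lemma frobNorm_mul_le (A : Matrix ι κ ℝ) (B : Matrix κ α ℝ) :
    frobNorm (A * B) ≤ frobNorm A * frobNorm B := by
  simpa only [frobNorm_eq_norm] using Matrix.frobenius_norm_mul A B

lemma euclNorm_mulVec_le (A : Matrix ι κ ℝ) (v : κ → ℝ) :
    euclNorm (A *ᵥ v) ≤ frobNorm A * euclNorm v := by
  simpa only [frobNorm_eq_norm, euclNorm_eq_norm, ← Matrix.frobenius_norm_replicateCol (ι := Unit),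
    Matrix.replicateCol_mulVec] using Matrix.frobenius_norm_mul A (Matrix.replicateCol Unit v)

lemma frobNorm_sq_eq_sum_euclNorm_col_sq (A : Matrix ι κ ℝ) :
    frobNorm A ^ 2 = ∑ j, euclNorm (Aᵀ j) ^ 2 := by
  unfold frobNorm euclNorm
  rw [Real.sq_sqrt (by positivity), Finset.sum_comm]
  exact sum_congr rfl fun j _ => (Real.sq_sqrt (by positivity)).symm

lemma frobNorm_le_of_abs_le {A B : Matrix ι κ ℝ} (h : ∀ i j, |A i j| ≤ |B i j|) :
    frobNorm A ≤ frobNorm B :=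
  Real.sqrt_le_sqrt <| sum_le_sum fun i _ => sum_le_sum fun j _ => sq_le_sq.mpr (h i j)

lemma frobNorm_reluM_sub_le (A B : Matrix ι κ ℝ) :
    frobNorm (reluM A - reluM B) ≤ frobNorm (A - B) :=
  frobNorm_le_of_abs_le fun i j => abs_max_sub_max_le_abs (A i j) (B i j) 0

lemma frobNorm_reluM_le (A : Matrix ι κ ℝ) : frobNorm (reluM A) ≤ frobNorm A := by
  have hzero : reluM (0 : Matrix ι κ ℝ) = 0 := by ext; simp [reluM]
  simpa [hzero] using frobNorm_reluM_sub_le A 0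

lemma bddAbove_specNorm_set (A : Matrix ι κ ℝ) :
    BddAbove {r : ℝ | ∃ v : κ → ℝ, euclNorm v ≤ 1 ∧ r = euclNorm (A *ᵥ v)} := by
  refine ⟨frobNorm A, ?_⟩
  rintro r ⟨v, hv, rfl⟩
  calc euclNorm (A *ᵥ v) ≤ frobNorm A * euclNorm v := euclNorm_mulVec_le A v
    _ ≤ frobNorm A := mul_le_of_le_one_right (frobNorm_nonneg A) hv

lemma specNorm_nonneg (A : Matrix ι κ ℝ) : 0 ≤ specNorm A :=
  le_csSup (bddAbove_specNorm_set A) ⟨0, by simp [euclNorm], by simp [euclNorm]⟩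

lemma euclNorm_mulVec_le_specNorm (A : Matrix ι κ ℝ) (v : κ → ℝ) :
    euclNorm (A *ᵥ v) ≤ specNorm A * euclNorm v := by
  rcases eq_or_ne v 0 with rfl | hv
  · simp [euclNorm]
  have ht : 0 < euclNorm v := by
    rw [euclNorm_eq_norm, norm_pos_iff]
    exact fun h => hv (congrArg WithLp.ofLp h)
  have hunit : euclNorm ((euclNorm v)⁻¹ • v) ≤ 1 := by
    rw [euclNorm_smul, abs_of_pos (inv_pos.mpr ht), inv_mul_cancel₀ ht.ne']
  have hle := le_csSup (bddAbove_specNorm_set A) ⟨_, hunit, rfl⟩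
  rw [Matrix.mulVec_smul, euclNorm_smul, abs_of_pos (inv_pos.mpr ht), inv_mul_le_iff₀ ht] at hle
  rw [mul_comm]
  exact hle

lemma frobNorm_mul_le_specNorm (A : Matrix ι κ ℝ) (M : Matrix κ α ℝ) :
    frobNorm (A * M) ≤ specNorm A * frobNorm M := by
  -- column `j` of `A * M` is `A *ᵥ Mᵀ j` by definition of the product
  have hcol : ∀ j, euclNorm ((A * M)ᵀ j) ≤ specNorm A * euclNorm (Mᵀ j) := fun j =>
    euclNorm_mulVec_le_specNorm A (Mᵀ j)
  refine le_of_sq_le_sq ?_ (mul_nonneg (specNorm_nonneg A) (frobNorm_nonneg M))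
  rw [mul_pow, frobNorm_sq_eq_sum_euclNorm_col_sq, frobNorm_sq_eq_sum_euclNorm_col_sq, mul_sum]
  exact sum_le_sum fun j _ => by
    rw [← mul_pow]; exact pow_le_pow_left₀ (euclNorm_nonneg _) (hcol j) 2

lemma frobNorm_mul_sub_mul_le (X Y : Matrix ι κ ℝ) (D E : Matrix κ α ℝ) :
    frobNorm (X * D - Y * E) ≤ frobNorm (X - Y) * frobNorm D + frobNorm Y * frobNorm (D - E) := by
  have hsplit : X * D - Y * E = (X - Y) * D + Y * (D - E) := by
    rw [Matrix.sub_mul, Matrix.mul_sub]; abel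
  rw [hsplit]
  exact (frobNorm_add_le _ _).trans (add_le_add (frobNorm_mul_le _ _) (frobNorm_mul_le _ _))

lemma euclNorm_mulVec_sub_mulVec_le (X Y : Matrix ι κ ℝ) (v w : κ → ℝ) :
    euclNorm (X *ᵥ v - Y *ᵥ w) ≤ frobNorm (X - Y) * euclNorm v + frobNorm Y * euclNorm (v - w) := by
  have hsplit : X *ᵥ v - Y *ᵥ w = (X - Y) *ᵥ v + Y *ᵥ (v - w) := by
    rw [Matrix.sub_mulVec, Matrix.mulVec_sub]; abel
  rw [hsplit]
  exact (euclNorm_add_le _ _).trans (add_le_add (euclNorm_mulVec_le _ _) (euclNorm_mulVec_le _ _))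

end Norms

section Layer

variable {ι κ α β : Type*} [Fintype ι] [Fintype κ] [Fintype α] [Fintype β]
  {U : Matrix ι κ ℝ} {X Y : Matrix κ α ℝ} {D E : Matrix α β ℝ} {μ : ℝ}

lemma frobNorm_layer_le (hU : specNorm U ≤ 1) (hD : frobNorm D ≤ μ) :
    frobNorm (reluM (U * X * D)) ≤ frobNorm X * μ :=
  calc frobNorm (reluM (U * X * D)) ≤ frobNorm (U * (X * D)) := by
        rw [← Matrix.mul_assoc]; exact frobNorm_reluM_le _
    _ ≤ specNorm U * (frobNorm X * frobNorm D) :=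
        (frobNorm_mul_le_specNorm _ _).trans
          (mul_le_mul_of_nonneg_left (frobNorm_mul_le _ _) (specNorm_nonneg U))
    _ ≤ frobNorm X * frobNorm D :=
        mul_le_of_le_one_left (mul_nonneg (frobNorm_nonneg X) (frobNorm_nonneg D)) hU
    _ ≤ frobNorm X * μ := mul_le_mul_of_nonneg_left hD (frobNorm_nonneg X)

lemma frobNorm_layer_sub_le (hU : specNorm U ≤ 1) (hD : frobNorm D ≤ μ) :
    frobNorm (reluM (U * X * D) - reluM (U * Y * E))
      ≤ frobNorm (X - Y) * μ + frobNorm Y * frobNorm (D - E) :=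
  calc frobNorm (reluM (U * X * D) - reluM (U * Y * E))
      ≤ frobNorm (U * (X * D - Y * E)) := by
        rw [Matrix.mul_sub, ← Matrix.mul_assoc, ← Matrix.mul_assoc]
        exact frobNorm_reluM_sub_le _ _
    _ ≤ specNorm U * (frobNorm (X - Y) * frobNorm D + frobNorm Y * frobNorm (D - E)) :=
        (frobNorm_mul_le_specNorm _ _).trans
          (mul_le_mul_of_nonneg_left (frobNorm_mul_sub_mul_le _ _ _ _) (specNorm_nonneg U))
    _ ≤ frobNorm (X - Y) * frobNorm D + frobNorm Y * frobNorm (D - E) :=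
        mul_le_of_le_one_left (add_nonneg (mul_nonneg (frobNorm_nonneg _) (frobNorm_nonneg _))
          (mul_nonneg (frobNorm_nonneg _) (frobNorm_nonneg _))) hU
    _ ≤ frobNorm (X - Y) * μ + frobNorm Y * frobNorm (D - E) := by
        gcongr
        exact frobNorm_nonneg _

end Layer

section Recursion

variable {ξ μ : ℝ}

lemma le_mul_pow_of_le_mul {b : ℕ → ℝ} {m : ℕ} (h0 : b 0 ≤ ξ) (hμ : 0 ≤ μ)
    (hstep : ∀ i < m, b (i + 1) ≤ b i * μ) : ∀ i ≤ m, b i ≤ ξ * μ ^ i := by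
  intro i hi
  induction i with
  | zero => simpa using h0
  | succ i ih =>
    calc b (i + 1) ≤ b i * μ := hstep i hi
      _ ≤ ξ * μ ^ i * μ := mul_le_mul_of_nonneg_right (ih (by omega)) hμ
      _ = ξ * μ ^ (i + 1) := by ring

lemma le_mul_pow_succ_mul_add {δ δ' b ε S : ℝ} {i : ℕ} (hξ : 0 ≤ ξ) (hμ : 1 ≤ μ) (hε : 0 ≤ ε)
    (hδ : δ ≤ ξ * μ ^ i * S) (hb : b ≤ ξ * μ ^ i) (hδ' : δ' ≤ δ * μ + b * ε) :
    δ' ≤ ξ * μ ^ (i + 1) * (S + ε) := by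
  have hμi : ξ * μ ^ i ≤ ξ * μ ^ (i + 1) :=
    mul_le_mul_of_nonneg_left (pow_le_pow_right₀ hμ i.le_succ) hξ
  calc δ' ≤ δ * μ + b * ε := hδ'
    _ ≤ ξ * μ ^ i * S * μ + ξ * μ ^ (i + 1) * ε := by
        gcongr
        exact hb.trans hμi
    _ = ξ * μ ^ (i + 1) * (S + ε) := by ring

lemma le_mul_pow_mul_sum_of_le_mul_add {δ b ε : ℕ → ℝ} {m : ℕ} (hξ : 0 ≤ ξ) (hμ : 1 ≤ μ)
    (hε : ∀ i, 0 ≤ ε i) (h0 : δ 0 ≤ 0) (hb : ∀ i < m, b i ≤ ξ * μ ^ i)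
    (hstep : ∀ i < m, δ (i + 1) ≤ δ i * μ + b i * ε i) :
    ∀ i ≤ m, δ i ≤ ξ * μ ^ i * ∑ j ∈ range i, ε j := by
  intro i hi
  induction i with
  | zero => simpa using h0
  | succ i ih =>
    rw [sum_range_succ]
    exact le_mul_pow_succ_mul_add hξ hμ (hε i) (ih (by omega)) (hb i hi) (hstep i hi)

end Recursion

lemma sum_add_le_sqrt_mul_sqrt {ι : Type*} (s : Finset ι) (f : ι → ℝ) (a : ℝ) :
    ∑ i ∈ s, f i + a ≤ √(#s + 1 : ℝ) * √(∑ i ∈ s, f i ^ 2 + a ^ 2) := by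
  rw [← Real.sqrt_mul (by positivity), add_comm, add_comm _ (a ^ 2)]
  refine Real.le_sqrt_of_sq_le ?_
  have hcs := sq_sum_le_card_mul_sum_sq (s := s.insertNone) (f := fun i => i.elim a f)
  simpa [sum_insertNone, card_insertNone] using hcs

/-- Layers are indexed from `0`: `B 0` is the input `B₁` and the output is `B (d - 1) *ᵥ c`. -/
theorem deep_decoder_lipschitz_general
    (d k : ℕ) (hd : 1 ≤ d) (n : ℕ → ℕ)
    (ξ μ : ℝ) (hμ : 1 ≤ μ)
    (U : ∀ i : ℕ, Matrix (Fin (n (i + 1))) (Fin (n i)) ℝ)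
    (hU : ∀ i, i < d - 1 → specNorm (U i) ≤ 1)
    (B B' : ∀ i : ℕ, Matrix (Fin (n i)) (Fin k) ℝ)
    (C C' : ℕ → Matrix (Fin k) (Fin k) ℝ)
    (c c' : Fin k → ℝ)
    (hB1 : frobNorm (B 0) ≤ ξ) (hBB' : B' 0 = B 0)
    (hrec : ∀ i, i < d - 1 → B (i + 1) = reluM (U i * B i * C i))
    (hrec' : ∀ i, i < d - 1 → B' (i + 1) = reluM (U i * B' i * C' i))
    (hC : ∀ i, i < d - 1 → frobNorm (C i) ≤ μ) (hc : euclNorm c ≤ μ)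
    (hC' : ∀ i, i < d - 1 → frobNorm (C' i) ≤ μ) :
    euclNorm (B (d - 1) *ᵥ c - B' (d - 1) *ᵥ c') ≤
      ξ * μ ^ d * d *
        Real.sqrt ((∑ i ∈ Finset.range (d - 1), frobNorm (C i - C' i) ^ 2)
          + euclNorm (c - c') ^ 2) := by
  obtain ⟨m, rfl⟩ : ∃ m, d = m + 1 := ⟨d - 1, by omega⟩
  simp only [Nat.add_sub_cancel] at hU hrec hrec' hC hC' ⊢
  have hξ : 0 ≤ ξ := (frobNorm_nonneg _).trans hB1
  have hB' : ∀ i ≤ m, frobNorm (B' i) ≤ ξ * μ ^ i :=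
    le_mul_pow_of_le_mul (hBB' ▸ hB1) (zero_le_one.trans hμ) fun i hi => by
      rw [hrec' i hi]; exact frobNorm_layer_le (hU i hi) (hC' i hi)
  have hδ : frobNorm (B m - B' m) ≤ ξ * μ ^ m * ∑ i ∈ range m, frobNorm (C i - C' i) :=
    le_mul_pow_mul_sum_of_le_mul_add (δ := fun i => frobNorm (B i - B' i)) hξ hμ
      (fun _ => frobNorm_nonneg _) (by simp [hBB', frobNorm]) (fun i hi => hB' i hi.le)
      (fun i hi => by rw [hrec i hi, hrec' i hi]; exact frobNorm_layer_sub_le (hU i hi) (hC i hi))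
      m le_rfl
  have hout := le_mul_pow_succ_mul_add hξ hμ (euclNorm_nonneg (c - c')) hδ (hB' m le_rfl)
    ((euclNorm_mulVec_sub_mulVec_le _ _ c c').trans
      (by gcongr; exact frobNorm_nonneg _))
  calc euclNorm (B m *ᵥ c - B' m *ᵥ c')
      ≤ ξ * μ ^ (m + 1) * (∑ i ∈ range m, frobNorm (C i - C' i) + euclNorm (c - c')) := hout
    _ ≤ ξ * μ ^ (m + 1) * (√(m + 1 : ℝ) * √(∑ i ∈ range m, frobNorm (C i - C' i) ^ 2
          + euclNorm (c - c') ^ 2)) := by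
        gcongr
        simpa using sum_add_le_sqrt_mul_sqrt (range m) (fun i => frobNorm (C i - C' i)) _
    _ ≤ ξ * μ ^ (m + 1) * ((m + 1 : ℕ) * √(∑ i ∈ range m, frobNorm (C i - C' i) ^ 2
          + euclNorm (c - c') ^ 2)) := by
        gcongr
        exact_mod_cast Real.sqrt_le_self_iff.mpr (Or.inr (by simp))
    _ = _ := by ring

/-- The deep decoder with `d` layers (layers indexed `0, …, d-1`, so that
`B 0` is the fixed input `B₁` and the output is `G(C) = B (d-1) *ᵥ c`) is
`ξ μ^d d`-Lipschitz on the set of `μ`-bounded coefficients, when the coefficients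
are viewed as one Euclidean vector. -/
theorem deep_decoder_lipschitz
    (d k : ℕ) (hd : 1 ≤ d) (n : ℕ → ℕ)
    (ξ μ : ℝ) (hξ : 0 ≤ ξ) (hμ : 1 ≤ μ)
    (U : ∀ i : ℕ, Matrix (Fin (n (i + 1))) (Fin (n i)) ℝ)
    (hU : ∀ i, i < d - 1 → specNorm (U i) ≤ 1)
    (B B' : ∀ i : ℕ, Matrix (Fin (n i)) (Fin k) ℝ)
    (C C' : ℕ → Matrix (Fin k) (Fin k) ℝ)
    (c c' : Fin k → ℝ)
    (hB1 : frobNorm (B 0) ≤ ξ) (hBB' : B' 0 = B 0)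
    (hrec : ∀ i, i < d - 1 → B (i + 1) = reluM (U i * B i * C i))
    (hrec' : ∀ i, i < d - 1 → B' (i + 1) = reluM (U i * B' i * C' i))
    (hC : ∀ i, i < d - 1 → frobNorm (C i) ≤ μ) (hc : euclNorm c ≤ μ)
    (hC' : ∀ i, i < d - 1 → frobNorm (C' i) ≤ μ) (hc' : euclNorm c' ≤ μ) :
    euclNorm (B (d - 1) *ᵥ c - B' (d - 1) *ᵥ c') ≤
      ξ * μ ^ d * d *
        Real.sqrt ((∑ i ∈ Finset.range (d - 1), frobNorm (C i - C' i) ^ 2)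
          + euclNorm (c - c') ^ 2) :=
  deep_decoder_lipschitz_general d k hd n ξ μ hμ U hU B B' C C' c c' hB1 hBB' hrec hrec' hC hc hC'
end

section
/- Fix d ≥ 2 and set n₁ = 2 and n_{i+1} = 2nᵢ − 1 for i = 1,…,d−1. Consider the bias architecture with layer widths k₁ = 2, k₂, …, k_d, input B₁ = I₂ (the 2×2 identity), layers B_{i+1} = relu(Mᵢ Bᵢ Cᵢ + 𝟙 aᵢᵀ) with Cᵢ ∈ ℝ^{kᵢ×k_{i+1}} and aᵢ ∈ ℝ^{k_{i+1}}, and output G(C,a) = B_d c_d + a_d 𝟙 with c_d ∈ ℝ^{k_d} and a_d ∈ ℝ. Then for every discrete s-piecewise linear vector x ∈ ℝ^{n_d} there exist layer widths k₂,…,k_d and parameters (C₁,…,C_{d−1}, a₁,…,a_{d−1}, c_d, a_d) having at most s(d+1) + 1 non-zero entries in total, such that G(C,a) = x. -/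
open Matrix Finset

/-- The linear-interpolation upsampling matrix `Mᵢ : ℝ^{nᵢ} → ℝ^{2nᵢ − 1}` for the dimensions
`nᵢ = 2^i + 1` (0-indexed; the paper's `n₁ = 2` is `n 0 = 2^0 + 1`, and `n_{i+1} = 2nᵢ − 1`
becomes `2^{i+1} + 1 = 2(2^i + 1) − 1`).  In 0-based coordinates, `(M v)_{2j} = v_j` and
`(M v)_{2j+1} = (v_j + v_{j+1})/2`. -/
noncomputable def Mup (i : ℕ) : Matrix (Fin (2 ^ (i + 1) + 1)) (Fin (2 ^ i + 1)) ℝ :=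
  Matrix.of fun r j =>
    if (r : ℕ) = 2 * (j : ℕ) then 1
    else if (r : ℕ) = 2 * (j : ℕ) + 1 ∨ (r : ℕ) + 1 = 2 * (j : ℕ) then (1 / 2 : ℝ)
    else 0

/-- `x ∈ ℝ^n` is a discrete `s`-piecewise linear function: there are 0-based indices
`0 = q₀ < q₁ < ⋯ < q_s = n − 1` and slopes `β₁, …, β_s` such that on each segment
`q_{j-1} ≤ i ≤ q_j` one has `x_i = x_{q_{j-1}} + β_j (i − q_{j-1})`. -/
def IsPWL (n s : ℕ) (x : Fin n → ℝ) : Prop :=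
  ∃ (q : ℕ → ℕ) (β : ℕ → ℝ),
    q 0 = 0 ∧ q s = n - 1 ∧ (∀ j, j < s → q j < q (j + 1)) ∧
    ∀ j, j < s → ∀ i, q j ≤ i → i ≤ q (j + 1) →
      ∀ (hi : i < n) (hq : q j < n),
        x ⟨i, hi⟩ = x ⟨q j, hq⟩ + β j * ((i : ℝ) - (q j : ℝ))

/-!
A discrete piecewise-linear vector is a constant plus a sum of hinges `γ t * relu (r - q t)` at its
breakpoints `q t`, where `γ` are the jumps of the slope. The network produces exactly these hinges.
Column 1 of `B₀ = I₂` is the index ramp `r ↦ r`. Upsampling halves a ramp in index coordinates, so a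
width-one layer with weight `2` and no bias carries the ramp `r ↦ r` to the next resolution, and the
last hidden layer, with `s` channels of weight `2` and biases `-q t`, outputs the hinges themselves.
The output layer weighs them by `γ t` and adds the constant. This costs `d - 2 + 3s + 1` non-zero
parameters, which is at most `s (d + 1) + 1` since `s ≥ 1`.
-/

def slopeJumps (β : ℕ → ℝ) : ℕ → ℝ
  | 0 => β 0
  | t + 1 => β (t + 1) - β t

lemma sum_range_succ_slopeJumps (β : ℕ → ℝ) (s : ℕ) :
    ∑ t ∈ range (s + 1), slopeJumps β t = β s := by
  induction s with
  | zero => simp [slopeJumps]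
  | succ s ih => rw [sum_range_succ, ih, slopeJumps]; ring

lemma eq_add_sum_slopeJumps_mul_relu {y : ℕ → ℝ} {q : ℕ → ℕ} {β : ℕ → ℝ} {s : ℕ}
    (hq : ∀ j < s, q j < q (j + 1))
    (hseg : ∀ j < s, ∀ i, q j ≤ i → i ≤ q (j + 1) → y i = y (q j) + β j * ((i : ℝ) - q j))
    {i : ℕ} (hi₀ : q 0 ≤ i) (hiₛ : i ≤ q s) :
    y i = y (q 0) + ∑ t ∈ range s, slopeJumps β t * max ((i : ℝ) - q t) 0 := by
  induction s generalizing i with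
  | zero => simp [le_antisymm hiₛ hi₀]
  | succ s ih =>
    have hq' : ∀ j < s, q j < q (j + 1) := fun j hj => hq j (by omega)
    have hseg' := fun j (hj : j < s) => hseg j (by omega)
    have hmono : MonotoneOn q (Set.Iic (s + 1)) :=
      (strictMonoOn_Iic_of_lt_succ (by simpa using hq)).monotoneOn
    have hqs : ∀ t ≤ s, q t ≤ q s := fun t ht =>
      hmono (Set.mem_Iic.2 (by omega)) (Set.mem_Iic.2 (by omega)) ht
    rcases le_total i (q s) with his | hsi
    · have hrelu : max ((i : ℝ) - q s) 0 = 0 := max_eq_right (by simpa using his)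
      rw [sum_range_succ, ih hq' hseg' hi₀ his, hrelu, mul_zero, add_zero]
    · have hactive : ∀ {r : ℕ}, q s ≤ r → ∀ t ∈ range (s + 1),
          max ((r : ℝ) - q t) 0 = r - q t := fun hr t ht =>
        max_eq_left (sub_nonneg.2 (by exact_mod_cast (hqs t (by simpa using ht)).trans hr))
      have hys : y (q s) = y (q 0) + ∑ t ∈ range (s + 1), slopeJumps β t * (q s - q t) := by
        rw [ih hq' hseg' (hqs 0 s.zero_le) le_rfl, sum_range_succ, sub_self, mul_zero, add_zero]
        exact congrArg _
          (sum_congr rfl fun t ht => by rw [hactive le_rfl t (range_mono s.le_succ ht)])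
      calc y i = y (q s) + β s * (i - q s) := hseg s (by omega) i hsi hiₛ
        _ = y (q 0) + ∑ t ∈ range (s + 1), slopeJumps β t * (q s - q t)
              + (∑ t ∈ range (s + 1), slopeJumps β t) * (i - q s) := by
          rw [hys, sum_range_succ_slopeJumps]
        _ = y (q 0) + ∑ t ∈ range (s + 1), slopeJumps β t * max ((i : ℝ) - q t) 0 := by
          rw [sum_mul, add_assoc, ← sum_add_distrib]
          exact congrArg _ (sum_congr rfl fun t ht => by rw [hactive hsi t ht]; ring)

lemma IsPWL.exists_eq_add_sum_relu {n s : ℕ} {x : Fin n → ℝ} (hx : IsPWL n s x) :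
    ∃ (c : ℝ) (q : ℕ → ℕ) (γ : ℕ → ℝ),
      ∀ i : Fin n, x i = c + ∑ t ∈ range s, γ t * max (((i : ℕ) : ℝ) - q t) 0 := by
  obtain ⟨q, β, hq₀, hqₛ, hq, hseg⟩ := hx
  cases n with
  | zero => exact ⟨0, q, β, fun i => i.elim0⟩
  | succ n =>
    have hmono : MonotoneOn q (Set.Iic s) :=
      (strictMonoOn_Iic_of_lt_succ (by simpa using hq)).monotoneOn
    have hqn : ∀ j ≤ s, q j < n + 1 := fun j hj =>
      Nat.lt_succ_of_le ((hmono (Set.mem_Iic.2 hj) Set.self_mem_Iic hj).trans_eq hqₛ)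
    set y : ℕ → ℝ := fun i => if h : i < n + 1 then x ⟨i, h⟩ else 0
    have hyx : ∀ i : Fin (n + 1), y i = x i := fun i => dif_pos i.isLt
    have hyseg : ∀ j < s, ∀ i, q j ≤ i → i ≤ q (j + 1) → y i = y (q j) + β j * ((i : ℝ) - q j) :=
      fun j hj i hji hij => by
        have hin : i < n + 1 := hij.trans_lt (hqn (j + 1) hj)
        simp only [y, dif_pos hin, dif_pos (hqn j hj.le)]
        exact hseg j hj i hji hij hin (hqn j hj.le)
    refine ⟨y (q 0), q, slopeJumps β, fun i => ?_⟩
    rw [← hyx i]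
    exact eq_add_sum_slopeJumps_mul_relu hq hyseg (by omega) (by omega)

lemma IsPWL.pos_of_two_le {n s : ℕ} {x : Fin n → ℝ} (hx : IsPWL n s x) (hn : 2 ≤ n) : 0 < s := by
  obtain ⟨q, -, hq₀, hqₛ, -⟩ := hx
  by_contra! hs
  obtain rfl : s = 0 := by omega
  omega

lemma Mup_mulVec_natCast (i : ℕ) :
    Mup i *ᵥ (fun c => ((c : ℕ) : ℝ)) = fun r : Fin (2 ^ (i + 1) + 1) => ((r : ℕ) : ℝ) / 2 := by
  funext r
  simp only [mulVec, dotProduct]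
  have hr := r.isLt
  have hMup : ∀ c : Fin (2 ^ i + 1), (r : ℕ) + 1 ≠ 2 * c → (r : ℕ) ≠ 2 * c + 1 → (r : ℕ) ≠ 2 * c →
    Mup i r c * c = 0 := fun c h₁ h₂ h₃ => by simp [Mup, h₁, h₂, h₃]
  rcases Nat.even_or_odd' (r : ℕ) with ⟨m, hm | hm⟩
  · rw [Fintype.sum_eq_single (⟨m, by omega⟩ : Fin (2 ^ i + 1)) fun c hc =>
      hMup c (by omega) (by omega) fun h => hc (Fin.ext (by simp; omega))]
    simp [Mup, hm]
  · rw [Fintype.sum_eq_add (⟨m, by omega⟩ : Fin (2 ^ i + 1)) ⟨m + 1, by omega⟩ (by simp)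
      fun c hc => hMup c (fun h => hc.2 (Fin.ext (by simp; omega)))
        (fun h => hc.1 (Fin.ext (by simp; omega))) (by omega)]
    simp only [Mup, of_apply, hm, true_or, if_true]
    split_ifs <;> first | omega | (push_cast; ring)

def rampSelector (c₀ k k' : ℕ) : Matrix (Fin k) (Fin k') ℝ :=
  of fun p _ => if (p : ℕ) = c₀ then 2 else 0

lemma reluM_Mup_mul_rampSelector_add {i k k' c₀ : ℕ} (B : Matrix (Fin (2 ^ i + 1)) (Fin k) ℝ)
    (hc₀ : c₀ < k) (hB : ∀ r, B r ⟨c₀, hc₀⟩ = r) (a : Fin k' → ℝ) :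
    reluM (Mup i * B * rampSelector c₀ k k' + of fun _ j => a j) =
      of fun (r : Fin (2 ^ (i + 1) + 1)) j => max (((r : ℕ) : ℝ) + a j) 0 := by
  have hBC : B * rampSelector c₀ k k' =
      of fun (c : Fin (2 ^ i + 1)) (_ : Fin k') => 2 * ((c : ℕ) : ℝ) := by
    ext c j
    rw [mul_apply, Fintype.sum_eq_single ⟨c₀, hc₀⟩ fun p hp => by
      simp [rampSelector, show (p : ℕ) ≠ c₀ from fun h => hp (Fin.ext h)]]
    simp [rampSelector, hB, mul_comm]
  ext r j
  have hMup := congrFun (Mup_mulVec_natCast i) r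
  simp only [mulVec, dotProduct] at hMup
  simp only [reluM, of_apply, Matrix.add_apply, Matrix.mul_assoc, hBC, mul_apply]
  congr 2
  simp_rw [mul_left_comm _ (2 : ℝ), ← mul_sum, hMup]
  ring

lemma card_rampSelector_ne_zero_le (c₀ k k' : ℕ) :
    #{p : Fin k × Fin k' | rampSelector c₀ k k' p.1 p.2 ≠ 0} ≤ k' := by
  calc #{p : Fin k × Fin k' | rampSelector c₀ k k' p.1 p.2 ≠ 0}
      ≤ #(univ : Finset (Fin k')) := card_le_card_of_injOn Prod.snd (fun _ _ => mem_univ _)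
        fun p hp p' hp' h => by
          have hsel : ∀ p : Fin k × Fin k', rampSelector c₀ k k' p.1 p.2 ≠ 0 → (p.1 : ℕ) = c₀ :=
            fun p hp => by_contra fun hne => hp (if_neg hne)
          simp only [coe_filter, mem_univ, true_and, Set.mem_ofPred_eq] at hp hp'
          exact Prod.ext (Fin.ext ((hsel p hp).trans (hsel p' hp').symm)) h
    _ = k' := card_fin k'

namespace HingeNet

variable (d s : ℕ) (q : ℕ → ℕ)

def width (i : ℕ) : ℕ := if i = 0 then 2 else if i + 1 < d then 1 else s

def rampCol (i : ℕ) : ℕ := if i = 0 then 1 else 0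

def weight (i : ℕ) : Matrix (Fin (width d s i)) (Fin (width d s (i + 1))) ℝ :=
  rampSelector (rampCol i) _ _

def bias (i : ℕ) (j : Fin (width d s (i + 1))) : ℝ := if i + 2 = d then -(q j : ℝ) else 0

def layer : (i : ℕ) → Matrix (Fin (2 ^ i + 1)) (Fin (width d s i)) ℝ
  | 0 => of fun p c => if (p : ℕ) = c then 1 else 0
  | i + 1 => of fun r j => max (((r : ℕ) : ℝ) + bias d s q i j) 0

variable {d s}

lemma rampCol_lt_width {i : ℕ} (hi : i < d - 1) : rampCol i < width d s i := by
  unfold rampCol width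
  split_ifs <;> omega

lemma layer_rampCol {i : ℕ} (hi : i < d - 1) (r : Fin (2 ^ i + 1)) :
    layer d s q i r ⟨rampCol i, rampCol_lt_width hi⟩ = r := by
  cases i with
  | zero => fin_cases r <;> simp [layer, rampCol]
  | succ i => simp [layer, bias, show i + 2 ≠ d by omega]

lemma layer_succ {i : ℕ} (hi : i < d - 1) :
    layer d s q (i + 1) =
      reluM (Mup i * layer d s q i * weight d s i + of fun _ j => bias d s q i j) :=
  (reluM_Mup_mul_rampSelector_add _ _ (layer_rampCol q hi) _).symm

lemma width_pred (hd : 2 ≤ d) : width d s (d - 1) = s := by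
  unfold width
  split_ifs <;> omega

lemma layer_pred_mulVec_add (hd : 2 ≤ d) (γ : ℕ → ℝ) (c : ℝ) :
    layer d s q (d - 1) *ᵥ (fun j => γ j) + (fun _ => c) =
      fun r : Fin (2 ^ (d - 1) + 1) => c + ∑ t ∈ range s, γ t * max (((r : ℕ) : ℝ) - q t) 0 := by
  obtain ⟨e, rfl⟩ : ∃ e, d = e + 2 := ⟨d - 2, by omega⟩
  funext r
  simp only [Pi.add_apply, mulVec, dotProduct]
  rw [add_comm]
  congr 1
  show ∑ j : Fin (width (e + 2) s (e + 1)), max (((r : ℕ) : ℝ) + bias (e + 2) s q e j) 0 * γ j = _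
  simp only [bias, if_true, ← sub_eq_add_neg]
  rw [Fin.sum_univ_eq_sum_range (fun t => max (((r : ℕ) : ℝ) - q t) 0 * γ t),
    show width (e + 2) s (e + 1) = s from width_pred hd]
  exact sum_congr rfl fun t _ => mul_comm _ _

lemma card_weight_add_card_bias_le {i : ℕ} (hi : i < d - 1) :
    #{p : Fin (width d s i) × Fin (width d s (i + 1)) | weight d s i p.1 p.2 ≠ 0} +
      #{j | bias d s q i j ≠ 0} ≤ if i + 2 = d then 2 * s else 1 := by
  have hweight : #{p : Fin (width d s i) × Fin (width d s (i + 1)) | weight d s i p.1 p.2 ≠ 0}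
      ≤ width d s (i + 1) := card_rampSelector_ne_zero_le _ _ _
  have hwidth : width d s (i + 1) = if i + 2 = d then s else 1 := by
    rw [width, if_neg i.succ_ne_zero]
    split_ifs <;> omega
  split_ifs at hwidth ⊢ with hlast
  · have hbias := card_filter_le (univ : Finset (Fin (width d s (i + 1)))) (bias d s q i · ≠ 0)
    rw [card_fin] at hbias
    omega
  · have hbias : #{j | bias d s q i j ≠ 0} = 0 := by simp [bias, hlast]
    omega

lemma sum_card_weight_add_card_bias_le (hd : 2 ≤ d) :
    ∑ i ∈ range (d - 1),
        (#{p : Fin (width d s i) × Fin (width d s (i + 1)) | weight d s i p.1 p.2 ≠ 0} +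
          #{j | bias d s q i j ≠ 0}) ≤ d - 2 + 2 * s := by
  calc _ ≤ ∑ i ∈ range (d - 1), if i + 2 = d then 2 * s else 1 :=
        sum_le_sum fun i hi => card_weight_add_card_bias_le q (mem_range.1 hi)
    _ = d - 2 + 2 * s := by
      obtain ⟨e, rfl⟩ : ∃ e, d = e + 2 := ⟨d - 2, by omega⟩
      rw [show e + 2 - 1 = e + 1 by omega, sum_range_succ, if_pos rfl,
        sum_congr rfl fun i hi => if_neg (by simp at hi; omega)]
      simp

lemma card_params_le (hd : 2 ≤ d) (hs : 0 < s) (cd : Fin (width d s (d - 1)) → ℝ) (ad : ℝ) :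
    ∑ i ∈ range (d - 1),
        (#{p : Fin (width d s i) × Fin (width d s (i + 1)) | weight d s i p.1 p.2 ≠ 0} +
          #{j | bias d s q i j ≠ 0}) + #{j | cd j ≠ 0} + (if ad ≠ 0 then 1 else 0)
      ≤ s * (d + 1) + 1 := by
  have hlayers := sum_card_weight_add_card_bias_le (s := s) q hd
  have hout := (card_filter_le univ (cd · ≠ 0)).trans_eq ((card_fin _).trans (width_pred hd))
  have hconst : (if ad ≠ 0 then 1 else 0) ≤ 1 := by split_ifs <;> omega
  have harith : d - 2 + 3 * s ≤ s * (d + 1) := by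
    obtain ⟨e, rfl⟩ : ∃ e, d = e + 2 := ⟨d - 2, by omega⟩
    rw [Nat.add_sub_cancel]
    nlinarith
  omega

end HingeNet

/-- Every discrete `s`-piecewise linear vector `x ∈ ℝ^{n_d}` (here `n_d =
2^{d-1} + 1`, layers 0-indexed so the input is `B 0 = I₂` and the output uses `B (d-1)`) can be
represented exactly by the bias architecture `B_{i+1} = relu(Mᵢ Bᵢ Cᵢ + 𝟙 aᵢᵀ)`,
`G(C, a) = B_d c_d + a_d 𝟙`, for suitable layer widths and parameters with at most
`s(d+1) + 1` non-zero entries in total. -/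
theorem deep_decoder_represents_piecewise_linear
    (d s : ℕ) (hd : 2 ≤ d) (x : Fin (2 ^ (d - 1) + 1) → ℝ)
    (hx : IsPWL (2 ^ (d - 1) + 1) s x) :
    ∃ (k : ℕ → ℕ), k 0 = 2 ∧
    ∃ (C : ∀ i : ℕ, Matrix (Fin (k i)) (Fin (k (i + 1))) ℝ)
      (a : ∀ i : ℕ, Fin (k (i + 1)) → ℝ)
      (cd : Fin (k (d - 1)) → ℝ) (ad : ℝ)
      (B : ∀ i : ℕ, Matrix (Fin (2 ^ i + 1)) (Fin (k i)) ℝ),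
      (∀ p q, B 0 p q = if (p : ℕ) = (q : ℕ) then 1 else 0) ∧
      (∀ i, i < d - 1 →
        B (i + 1) = reluM (Mup i * B i * C i + Matrix.of fun _ q => a i q)) ∧
      ((∑ i ∈ Finset.range (d - 1),
          (((Finset.univ.filter fun p : Fin (k i) × Fin (k (i + 1)) => C i p.1 p.2 ≠ 0).card)
            + ((Finset.univ.filter fun q : Fin (k (i + 1)) => a i q ≠ 0).card)))
        + ((Finset.univ.filter fun q : Fin (k (d - 1)) => cd q ≠ 0).card)
        + (if ad ≠ 0 then 1 else 0) ≤ s * (d + 1) + 1) ∧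
      (B (d - 1) *ᵥ cd + fun _ => ad) = x := by
  obtain ⟨c, q, γ, hxq⟩ := hx.exists_eq_add_sum_relu
  have hs : 0 < s := hx.pos_of_two_le (by have := Nat.one_le_two_pow (n := d - 1); omega)
  refine ⟨HingeNet.width d s, rfl, HingeNet.weight d s, HingeNet.bias d s q, fun j => γ j, c,
    HingeNet.layer d s q, fun _ _ => rfl, fun i hi => HingeNet.layer_succ q hi, ?_, ?_⟩
  · exact HingeNet.card_params_le q hd hs _ _
  · rw [HingeNet.layer_pred_mulVec_add q hd]
    exact funext fun r => (hxq r).symm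
end

section
/- Let G be the one-layer convolutional decoder with k channels, filter length ℓ, and output dimension n ≥ 2, with parameterized filters. Then there exists a finite family of linear subspaces V₁,…,V_M of ℝ^n with M ≤ n^{ℓk²} and dim(V_t) ≤ ℓk² for every t, such that for every parameter tuple C there is some t with G(C) ∈ V_t. That is, the range of G is contained in a union of at most n^{ℓk²} many subspaces, each of dimension at most ℓk². -/
open Matrix Finset

/-- `circ n ℓ c` is the `n × n` circulant matrix implementing circular convolution with the
filter `c ∈ ℝ^ℓ`, i.e. the circulant matrix whose first row is `(c₁, …, c_ℓ, 0, …, 0)`. -/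
noncomputable def circ (n ℓ : ℕ) (c : Fin ℓ → ℝ) : Matrix (Fin n) (Fin n) ℝ :=
  Matrix.of fun i j =>
    if h : ((j - i : Fin n) : ℕ) < ℓ then c ⟨((j - i : Fin n) : ℕ), h⟩ else 0

/-- The one-layer convolutional decoder with `k` channels, filter length `ℓ` and output
dimension `n`: the parameters are the filters `Cf i j ∈ ℝ^ℓ` and the linear-combination
coefficients `c₂ ∈ ℝ^k`, and the output is
`G(C) = relu([Σⱼ T(c_{1j}) U₁ b_j, …, Σⱼ T(c_{kj}) U₁ b_j]) c₂`,
where `b_j` is the `j`-th column of the fixed input `B₁`. -/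
noncomputable def oneLayerG (n n₁ k ℓ : ℕ)
    (B1 : Matrix (Fin n₁) (Fin k) ℝ) (U : Matrix (Fin n) (Fin n₁) ℝ)
    (Ct : (Fin k → Fin k → (Fin ℓ → ℝ)) × (Fin k → ℝ)) : Fin n → ℝ :=
  reluM (Matrix.of fun (r : Fin n) (i : Fin k) =>
    (∑ j : Fin k, circ n ℓ (Ct.1 i j) *ᵥ (U *ᵥ fun t => B1 t j)) r) *ᵥ Ct.2

lemma circ_add (n ℓ : ℕ) (c c' : Fin ℓ → ℝ) :
    circ n ℓ (c + c') = circ n ℓ c + circ n ℓ c' := by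
  ext i j
  simp only [circ, Matrix.of_apply, Matrix.add_apply, Pi.add_apply]
  split <;> simp

lemma circ_smul (n ℓ : ℕ) (a : ℝ) (c : Fin ℓ → ℝ) :
    circ n ℓ (a • c) = a • circ n ℓ c := by
  ext i j
  simp only [circ, Matrix.of_apply, Matrix.smul_apply, Pi.smul_apply, smul_eq_mul]
  split <;> simp

/-- The per-channel linear map sending filters to the pre-activation column. -/
noncomputable def PhiL (n n₁ k ℓ : ℕ) (B1 : Matrix (Fin n₁) (Fin k) ℝ)
    (U : Matrix (Fin n) (Fin n₁) ℝ) : (Fin k → Fin ℓ → ℝ) →ₗ[ℝ] (Fin n → ℝ) where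
  toFun f := ∑ j, circ n ℓ (f j) *ᵥ (U *ᵥ fun t => B1 t j)
  map_add' f g := by
    simp [circ_add, Matrix.add_mulVec, Matrix.add_mul, Finset.sum_add_distrib]
  map_smul' a f := by
    simp [circ_smul, Matrix.smul_mulVec, Matrix.smul_mul, Finset.smul_sum]

/-- Coordinate masking as a linear map. -/
def maskL (n : ℕ) (P : Finset (Fin n)) : (Fin n → ℝ) →ₗ[ℝ] (Fin n → ℝ) where
  toFun x := fun r => if r ∈ P then x r else 0
  map_add' x y := by funext r; by_cases h : r ∈ P <;> simp [h]
  map_smul' a x := by funext r; by_cases h : r ∈ P <;> simp [h]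


open Classical in
/-- The set of positivity patterns on `s` realized by points of the submodule `p`. -/
noncomputable def patSet {E ι : Type*} [AddCommGroup E] [Module ℝ E]
    (φ : ι → E →ₗ[ℝ] ℝ) (s : Finset ι) (p : Submodule ℝ E) : Finset (Finset ι) :=
  s.powerset.filter (fun P => ∃ x ∈ p, P = s.filter (fun i => 0 < φ i x))

lemma sum_choose_succ (m d : ℕ) :
    ∑ j ∈ range (d + 1), (m + 1).choose j
      = ∑ j ∈ range (d + 1), m.choose j + ∑ j ∈ range d, m.choose j := by
  induction d with
  | zero => simp
  | succ d ih =>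
      have h1 := sum_range_succ (fun j => Nat.choose (m + 1) j) (d + 1)
      have h2 := sum_range_succ (fun j => Nat.choose m j) (d + 1)
      have h3 := sum_range_succ (fun j => Nat.choose m j) d
      have h4 : (m + 1).choose (d + 1) = m.choose d + m.choose (d + 1) :=
        Nat.choose_succ_succ _ _
      omega

lemma patSet_card_le {E ι : Type*} [AddCommGroup E] [Module ℝ E] [FiniteDimensional ℝ E]
    (φ : ι → E →ₗ[ℝ] ℝ) :
    ∀ (s : Finset ι) (p : Submodule ℝ E),
      (patSet φ s p).card ≤ ∑ j ∈ range (Module.finrank ℝ p + 1), (s.card).choose j := by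
  classical
  intro s
  induction s using Finset.strongInduction with
  | _ s ih =>
    intro p
    rcases s.eq_empty_or_nonempty with rfl | ⟨i₀, hi₀⟩
    · -- empty case
      calc (patSet φ ∅ p).card ≤ ({∅} : Finset (Finset ι)).card := by
            apply Finset.card_le_card
            intro P hP
            simp only [patSet, Finset.mem_filter, Finset.mem_powerset] at hP
            simp [Finset.subset_empty.mp hP.1]
        _ = 1 := rfl
        _ ≤ _ := by
            rw [Finset.sum_range_succ']
            simp
    · set s' := s.erase i₀ with hs'
      have hss : s' ⊂ s := Finset.erase_ssubset hi₀
      have hcard : s'.card + 1 = s.card := Finset.card_erase_add_one hi₀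
      -- restriction fact: for x, pattern on s' is erase of pattern on s
      have hres : ∀ x : E, s'.filter (fun i => 0 < φ i x)
          = (s.filter (fun i => 0 < φ i x)).erase i₀ := by
        intro x; ext i
        simp [hs', Finset.mem_erase, Finset.mem_filter, and_assoc, and_left_comm]
      by_cases h0 : ∀ x ∈ p, φ i₀ x = 0
      · -- i₀ never active
        have hsub : patSet φ s p ⊆ patSet φ s' p := by
          intro P hP
          simp only [patSet, Finset.mem_filter, Finset.mem_powerset] at hP ⊢
          obtain ⟨hPs, x, hx, rfl⟩ := hP
          have hi : i₀ ∉ s.filter (fun i => 0 < φ i x) := by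
            simp [h0 x hx]
          refine ⟨?_, x, hx, ?_⟩
          · rw [← Finset.erase_eq_of_notMem hi] at hPs ⊢
            exact fun a ha => Finset.mem_erase_of_ne_of_mem
              (Finset.ne_of_mem_erase ha) (hPs ha)
          · rw [hres x, Finset.erase_eq_of_notMem hi]
        calc (patSet φ s p).card ≤ (patSet φ s' p).card := Finset.card_le_card hsub
          _ ≤ ∑ j ∈ range (Module.finrank ℝ p + 1), (s'.card).choose j := ih s' hss p
          _ ≤ _ := Finset.sum_le_sum fun j _ =>
              Nat.choose_le_choose j (by omega)
      · push_neg at h0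
        obtain ⟨x₀, hx₀p, hx₀⟩ := h0
        set K : Submodule ℝ E := p ⊓ LinearMap.ker (φ i₀) with hK
        have hKlt : K < p := by
          refine lt_of_le_of_ne inf_le_left ?_
          intro hEq
          exact hx₀ (by simpa using ((hEq ▸ hx₀p : x₀ ∈ K).2))
        have hrk : Module.finrank ℝ K < Module.finrank ℝ p :=
          Submodule.finrank_lt_finrank_of_lt hKlt
        -- split patterns by whether they contain i₀
        set A := patSet φ s p with hA
        set A₁ := A.filter (fun P => i₀ ∈ P) with hA₁
        set A₂ := A.filter (fun P => ¬ i₀ ∈ P) with hA₂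
        have hsplit : A₁.card + A₂.card = A.card :=
          Finset.card_filter_add_card_filter_not (p := fun P => i₀ ∈ P)
        set B := patSet φ s' p with hB
        set C' := patSet φ s' K with hC'
        -- A₂ (patterns not containing i₀) sits inside B
        have h2B : A₂ ⊆ B := by
          intro P hP
          simp only [hA₂, Finset.mem_filter] at hP
          obtain ⟨hPA, hi₀P⟩ := hP
          simp only [hA, patSet, Finset.mem_filter, Finset.mem_powerset] at hPA
          obtain ⟨hPs, x, hx, rfl⟩ := hPA
          simp only [hB, patSet, Finset.mem_filter, Finset.mem_powerset]
          refine ⟨fun a ha => Finset.mem_erase_of_ne_of_mem ?_ (hPs ha), x, hx, ?_⟩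
          · rintro rfl; exact hi₀P ha
          · rw [hres x, Finset.erase_eq_of_notMem hi₀P]
        -- the erase image of A₁ sits inside B
        set X := A₁.image (fun P => P.erase i₀) with hX
        have hXB : X ⊆ B := by
          intro R hR
          simp only [hX, Finset.mem_image] at hR
          obtain ⟨P, hP, rfl⟩ := hR
          simp only [hA₁, Finset.mem_filter] at hP
          obtain ⟨hPA, hi₀P⟩ := hP
          simp only [hA, patSet, Finset.mem_filter, Finset.mem_powerset] at hPA
          obtain ⟨hPs, x, hx, rfl⟩ := hPA
          simp only [hB, patSet, Finset.mem_filter, Finset.mem_powerset]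
          exact ⟨fun a ha => Finset.mem_erase_of_ne_of_mem (Finset.ne_of_mem_erase ha)
            (hPs (Finset.mem_of_mem_erase ha)), x, hx, (hres x).symm⟩
        have hcardX : A₁.card = X.card := by
          rw [hX]
          refine (Finset.card_image_of_injOn ?_).symm
          intro P hP Q hQ hPQ
          rw [Finset.mem_coe, hA₁, Finset.mem_filter] at hP hQ
          have := Finset.insert_erase hP.2
          rw [← Finset.insert_erase hP.2, show P.erase i₀ = Q.erase i₀ from hPQ,
            Finset.insert_erase hQ.2]
        -- doubled patterns are realized on the kernel
        have hinter : X ∩ A₂ ⊆ C' := by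
          intro R hR
          obtain ⟨hRX, hRA₂⟩ := Finset.mem_inter.mp hR
          simp only [hX, Finset.mem_image] at hRX
          obtain ⟨P, hP, rfl⟩ := hRX
          simp only [hA₁, Finset.mem_filter] at hP
          obtain ⟨hPA, hi₀P⟩ := hP
          simp only [hA, patSet, Finset.mem_filter, Finset.mem_powerset] at hPA
          obtain ⟨hPs, a, ha, hPa⟩ := hPA
          simp only [hA₂, Finset.mem_filter] at hRA₂
          obtain ⟨hRA, hi₀R⟩ := hRA₂
          simp only [hA, patSet, Finset.mem_filter, Finset.mem_powerset] at hRA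
          obtain ⟨hRs, b, hb, hRb⟩ := hRA
          -- signs at i₀
          have hαpos : 0 < φ i₀ a := by
            have := hPa ▸ hi₀P
            simpa using (Finset.mem_filter.mp this).2
          have hβ : ¬ 0 < φ i₀ b := by
            intro hc
            exact hi₀R (hRb ▸ Finset.mem_filter.mpr ⟨hi₀, hc⟩)
          push_neg at hβ
          set α := φ i₀ a
          set β := φ i₀ b
          have hden : 0 < α - β := by linarith
          set t : ℝ := α / (α - β) with ht
          have ht0 : 0 < t := div_pos hαpos hden
          have ht1 : t ≤ 1 := by
            rw [ht, div_le_one hden]; linarith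
          set c : E := a + t • (b - a) with hc
          have hcp : c ∈ p := p.add_mem ha (p.smul_mem _ (p.sub_mem hb ha))
          have hφc : ∀ i, φ i c = (1 - t) * φ i a + t * φ i b := by
            intro i
            simp only [hc, map_add, _root_.map_smul, map_sub, smul_eq_mul]
            ring
          have htden : t * (α - β) = α := div_mul_cancel₀ α hden.ne'
          have hcK : c ∈ K := by
            refine Submodule.mem_inf.mpr ⟨hcp, ?_⟩
            rw [LinearMap.mem_ker, hφc i₀]
            show (1 - t) * α + t * β = 0
            nlinarith [htden]
          -- pattern of c on s' equals P.erase i₀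
          simp only [hC', patSet, Finset.mem_filter, Finset.mem_powerset]
          refine ⟨fun x hx => Finset.mem_erase_of_ne_of_mem (Finset.ne_of_mem_erase hx)
            (hPs (Finset.mem_of_mem_erase hx)), c, hcK, ?_⟩
          ext i
          constructor
          · intro hiR
            have hine : i ≠ i₀ := Finset.ne_of_mem_erase hiR
            have hiP : i ∈ P := Finset.mem_of_mem_erase hiR
            have his : i ∈ s := hPs hiP
            have hia : 0 < φ i a := by
              have h := hiP; rw [hPa] at h; exact (Finset.mem_filter.mp h).2
            have hib : 0 < φ i b := by
              have h := hiR; rw [hRb] at h; exact (Finset.mem_filter.mp h).2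
            refine Finset.mem_filter.mpr ⟨Finset.mem_erase_of_ne_of_mem hine his, ?_⟩
            have h1 : 0 ≤ (1 - t) * φ i a := mul_nonneg (by linarith) hia.le
            have h2 : 0 < t * φ i b := mul_pos ht0 hib
            rw [hφc i]; linarith
          · intro hi
            obtain ⟨his', hic⟩ := Finset.mem_filter.mp hi
            have hine : i ≠ i₀ := Finset.ne_of_mem_erase his'
            have his : i ∈ s := Finset.mem_of_mem_erase his'
            by_contra hiR
            have hiP : i ∉ P := fun h => hiR (Finset.mem_erase_of_ne_of_mem hine h)
            have hia : ¬ 0 < φ i a := fun h => hiP (hPa ▸ Finset.mem_filter.mpr ⟨his, h⟩)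
            have hib : ¬ 0 < φ i b := fun h => hiR (hRb ▸ Finset.mem_filter.mpr ⟨his, h⟩)
            push_neg at hia hib
            have h1 : (1 - t) * φ i a ≤ 0 := mul_nonpos_of_nonneg_of_nonpos (by linarith) hia
            have h2 : t * φ i b ≤ 0 := mul_nonpos_of_nonneg_of_nonpos ht0.le hib
            rw [hφc i] at hic; linarith
        -- final count
        have hcount : A.card ≤ B.card + C'.card := by
          have h1 : X.card + A₂.card = (X ∪ A₂).card + (X ∩ A₂).card :=
            (Finset.card_union_add_card_inter X A₂).symm
          have h2 : (X ∪ A₂).card ≤ B.card :=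
            Finset.card_le_card (Finset.union_subset hXB h2B)
          have h3 : (X ∩ A₂).card ≤ C'.card := Finset.card_le_card hinter
          omega
        have hbB := ih s' hss p
        have hbC := ih s' hss K
        rw [← hB] at hbB
        rw [← hC'] at hbC
        have hsub : ∑ j ∈ range (Module.finrank ℝ K + 1), (s'.card).choose j
            ≤ ∑ j ∈ range (Module.finrank ℝ p), (s'.card).choose j := by
          apply Finset.sum_le_sum_of_subset
          exact Finset.range_subset_range.mpr (by omega)
        have hps := sum_choose_succ s'.card (Module.finrank ℝ p)
        rw [← hcard]
        omega


lemma choose_succ_le_mul (n j : ℕ) : n.choose (j + 1) ≤ n.choose j * n := by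
  calc n.choose (j + 1) ≤ n.choose (j + 1) * (j + 1) := Nat.le_mul_of_pos_right _ (Nat.succ_pos j)
    _ = n.choose j * (n - j) := Nat.choose_succ_right_eq n j
    _ ≤ n.choose j * n := Nat.mul_le_mul_left _ (Nat.sub_le n j)

lemma two_mul_choose_le (n : ℕ) : ∀ j, 2 ≤ j → 2 * n.choose j ≤ n ^ j := by
  intro j
  induction j with
  | zero => omega
  | succ j ih =>
      intro hj
      rcases Nat.lt_or_ge j 2 with hj2 | hj2
      · -- j + 1 = 2, i.e. j = 1
        have hj1 : j = 1 := by omega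
        subst hj1
        have h : n.choose (1 + 1) * (1 + 1) = n.choose 1 * (n - 1) :=
          Nat.choose_succ_right_eq n 1
        have h1 : n.choose 1 = n := Nat.choose_one_right n
        rw [h1] at h
        have h2 : n * (n - 1) ≤ n * n := Nat.mul_le_mul_left _ (Nat.sub_le n 1)
        have h3 : n ^ (1 + 1) = n * n := by ring
        omega
      · have h1 := ih hj2
        have h2 := choose_succ_le_mul n j
        have h3 : n.choose j * n * 2 ≤ n ^ j * n := by
          have := Nat.mul_le_mul_right n h1
          calc n.choose j * n * 2 = 2 * n.choose j * n := by ring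
            _ ≤ n ^ j * n := this
        have h4 : n ^ (j + 1) = n ^ j * n := pow_succ n j
        have h5 : 2 * n.choose (j+1) ≤ 2 * (n.choose j * n) := by omega
        omega

lemma sum_choose_le_pow (n : ℕ) (hn : 2 ≤ n) :
    ∀ d, ∑ j ∈ range (d + 1), n.choose j ≤ n ^ d + 1 := by
  intro d
  induction d with
  | zero => simp
  | succ d ih =>
      rw [sum_range_succ]
      rcases Nat.eq_zero_or_pos d with rfl | hd
      · simp only [pow_one, zero_add, sum_range_one, Nat.choose_zero_right,
          Nat.choose_one_right]
        omega
      · have h1 : 2 * n.choose (d + 1) ≤ n ^ (d + 1) := two_mul_choose_le n (d + 1) (by omega)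
        have h2 : n ^ (d + 1) = n ^ d * n := pow_succ n d
        have h3 : n ^ d * 2 ≤ n ^ d * n := Nat.mul_le_mul_left _ hn
        have h4 : 1 ≤ n ^ d := Nat.one_le_two_pow.trans (Nat.pow_le_pow_left (by omega) d) |>.trans (le_refl _) 
        omega

/-- The range of the one-layer convolutional decoder with parameterized
filters is contained in a union of at most `n^{ℓk²}` linear subspaces of `ℝ^n`, each of
dimension at most `ℓk²`. -/
theorem one_layer_decoder_range_in_union_of_subspaces
    (n n₁ k ℓ : ℕ) (hn : 2 ≤ n) (hℓ : ℓ ≤ n)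
    (B1 : Matrix (Fin n₁) (Fin k) ℝ) (U : Matrix (Fin n) (Fin n₁) ℝ) :
    ∃ (M : ℕ) (V : Fin M → Submodule ℝ (Fin n → ℝ)),
      M ≤ n ^ (ℓ * k ^ 2) ∧
      (∀ t, Module.finrank ℝ (V t) ≤ ℓ * k ^ 2) ∧
      ∀ Ct : (Fin k → Fin k → (Fin ℓ → ℝ)) × (Fin k → ℝ),
        ∃ t, oneLayerG n n₁ k ℓ B1 U Ct ∈ V t := by
  classical
  -- abbreviations
  set E := (Fin k → Fin ℓ → ℝ) with hE
  set Φ := PhiL n n₁ k ℓ B1 U with hΦ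
  set φ : Fin n → E →ₗ[ℝ] ℝ := fun r => (LinearMap.proj r).comp Φ with hφ
  set S₀ := patSet φ Finset.univ (⊤ : Submodule ℝ E) with hS₀
  have hfrE : Module.finrank ℝ E = k * ℓ := by
    show Module.finrank ℝ (Fin k → Fin ℓ → ℝ) = k * ℓ
    rw [Module.finrank_pi_fintype]
    simp [Module.finrank_pi]
  have hfrtop : Module.finrank ℝ (⊤ : Submodule ℝ E) = k * ℓ := by
    rw [finrank_top]; exact hfrE
  have hcardS₀ : S₀.card ≤ n ^ (ℓ * k) + 1 := by
    have h1 := patSet_card_le φ Finset.univ (⊤ : Submodule ℝ E)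
    rw [hfrtop, Finset.card_univ, Fintype.card_fin, Nat.mul_comm k ℓ] at h1
    exact h1.trans (sum_choose_le_pow n hn (ℓ * k))
  have hemem : (∅ : Finset (Fin n)) ∈ S₀ := by
    simp only [hS₀, patSet, Finset.mem_filter, Finset.mem_powerset]
    exact ⟨Finset.empty_subset _, 0, Submodule.zero_mem _, by simp⟩
  have hpow1 : 1 ≤ n ^ (ℓ * k) := Nat.one_le_pow _ _ (by omega)
  -- select the covering family of patterns
  obtain ⟨S, hSne, hScard, hScov⟩ :
      ∃ S : Finset (Finset (Fin n)), S.Nonempty ∧ S.card ≤ n ^ (ℓ * k) ∧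
        ∀ P ∈ S₀, P ≠ ∅ → P ∈ S := by
    rcases (S₀.erase ∅).eq_empty_or_nonempty with he | hne
    · refine ⟨{∅}, Finset.singleton_nonempty _, by rw [Finset.card_singleton]; exact hpow1, ?_⟩
      intro P hP hPne
      exact absurd (he ▸ Finset.mem_erase.mpr ⟨hPne, hP⟩) (Finset.notMem_empty P)
    · refine ⟨S₀.erase ∅, hne, ?_, fun P hP hPne => Finset.mem_erase.mpr ⟨hPne, hP⟩⟩
      have := Finset.card_erase_add_one hemem
      omega
  -- the linear maps whose ranges are the subspaces
  set Lmap : (Fin k → Finset (Fin n)) → ((Fin k → E) →ₗ[ℝ] (Fin n → ℝ)) :=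
    fun Q => ∑ i, (maskL n (Q i)) ∘ₗ Φ ∘ₗ LinearMap.proj i with hLmap
  set M := S.card ^ k with hM
  have hcardfun : Fintype.card (Fin k → Fin S.card) = M := by
    simp [hM, Fintype.card_fun]
  set eqv : (Fin k → Fin S.card) ≃ Fin M := Fintype.equivFinOfCardEq hcardfun with heqv
  set σ : Fin S.card → Finset (Fin n) := fun t => (S.equivFin.symm t : Finset (Fin n)) with hσ
  refine ⟨M, fun t => LinearMap.range (Lmap (fun i => σ (eqv.symm t i))), ?_, ?_, ?_⟩
  · -- cardinality bound
    calc M ≤ (n ^ (ℓ * k)) ^ k := Nat.pow_le_pow_left hScard k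
      _ = n ^ (ℓ * k * k) := (pow_mul n (ℓ * k) k).symm
      _ = n ^ (ℓ * k ^ 2) := by rw [Nat.mul_assoc, ← Nat.pow_two]
  · -- dimension bound
    intro t
    have h1 := LinearMap.finrank_range_le (Lmap (fun i => σ (eqv.symm t i)))
    have h2 : Module.finrank ℝ (Fin k → E) = k * (k * ℓ) := by
      rw [Module.finrank_pi_fintype]
      simp [hfrE]
    rw [h2] at h1
    calc _ ≤ k * (k * ℓ) := h1
      _ = ℓ * k ^ 2 := by ring
  · -- coverage
    rintro ⟨Cf, c₂⟩
    set Pat : Fin k → Finset (Fin n) :=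
      fun i => Finset.univ.filter (fun r => 0 < φ r (Cf i)) with hPat
    have hPatS₀ : ∀ i, Pat i ∈ S₀ := by
      intro i
      simp only [hS₀, patSet, Finset.mem_filter, Finset.mem_powerset]
      exact ⟨Finset.filter_subset _ _, Cf i, Submodule.mem_top, rfl⟩
    set q : Fin k → S := fun i =>
      if h : Pat i ∈ S then ⟨Pat i, h⟩ else ⟨hSne.choose, hSne.choose_spec⟩ with hq
    refine ⟨eqv (fun i => S.equivFin (q i)), ?_⟩
    dsimp only
    have hQ : (fun i => σ (eqv.symm (eqv (fun i => S.equivFin (q i))) i))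
        = fun i => (q i : Finset (Fin n)) := by
      funext i
      simp [hσ]
    rw [hQ]
    -- the explicit preimage
    set g : Fin k → E := fun i => if Pat i ∈ S then c₂ i • Cf i else 0 with hg
    refine ⟨g, ?_⟩
    funext r
    have hsum : (Lmap fun i => (q i : Finset (Fin n))) g r
        = ∑ i, maskL n ((q i : Finset (Fin n))) (Φ (g i)) r := by
      simp [hLmap, LinearMap.sum_apply, Finset.sum_apply]
    rw [hsum]
    have hout : oneLayerG n n₁ k ℓ B1 U (Cf, c₂) r
        = ∑ i, max (Φ (Cf i) r) 0 * c₂ i := by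
      simp only [oneLayerG, reluM, Matrix.mulVec, dotProduct, Matrix.of_apply]
      rfl
    rw [hout]
    refine Finset.sum_congr rfl fun i _ => ?_
    by_cases h : Pat i ∈ S
    · have hqi : (q i : Finset (Fin n)) = Pat i := by simp [hq, h]
      have hgi : g i = c₂ i • Cf i := by simp [hg, h]
      rw [hqi, hgi, _root_.map_smul, _root_.map_smul]
      show (c₂ i • fun r' => if r' ∈ Pat i then Φ (Cf i) r' else 0) r = _
      simp only [Pi.smul_apply, smul_eq_mul]
      by_cases hr : r ∈ Pat i
      · have hpos : 0 < Φ (Cf i) r := by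
          have := (Finset.mem_filter.mp (hPat ▸ hr)).2
          exact this
        rw [if_pos hr, max_eq_left hpos.le]
        ring
      · have hnpos : ¬ 0 < Φ (Cf i) r := by
          intro hc
          exact hr (hPat ▸ Finset.mem_filter.mpr ⟨Finset.mem_univ r, hc⟩)
        push_neg at hnpos
        rw [if_neg hr, max_eq_right hnpos]
        ring
    · have hPe : Pat i = ∅ := by
        by_contra hne
        exact h (hScov _ (hPatS₀ i) hne)
      have hgi : g i = 0 := by simp [hg, h]
      have hnpos : ¬ 0 < Φ (Cf i) r := by
        intro hc
        have : r ∈ Pat i := hPat ▸ Finset.mem_filter.mpr ⟨Finset.mem_univ r, hc⟩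
        rw [hPe] at this
        exact absurd this (Finset.notMem_empty r)
      push_neg at hnpos
      rw [hgi, map_zero, map_zero, max_eq_right hnpos]
      simp
end
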